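/- arXiv:1411.2024 — 2 statements merged into one kernel-verified Lean document; each statement's English description precedes it below -/
import Mathlib

section
/- For three distinct states x0, x1, y of an irreducible recurrent Markov chain and x ∉ {x0, x1}, the Green functions satisfy G_{x0}(x,y) = G_{x0,x1}(x,y) + G_{x0,x1}(x1,y) · G_{x0}(x,x1), where G_{x0,x1} is the Green function of the chain killed just before the first positive hitting time of the set {x0, x1}. -/
open MeasureTheory ENNReal
open scoped Classical NNReal

/-- A (time-homogeneous) Markov chain on a state space `E`, given by its
transition probabilities `p` and the family of path-space laws `P x` (the chain started
at `x`), characterized by its finite-dimensional distributions. -/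
structure MC (E : Type*) [MeasurableSpace E] where
  p : E → E → ℝ≥0∞
  P : E → Measure (ℕ → E)
  prob : ∀ x, IsProbabilityMeasure (P x)
  stochastic : ∀ x, ∑' y, p x y = 1
  fdd : ∀ (x : E) (n : ℕ) (xs : Fin (n + 1) → E),
    P x {ω | ∀ i : Fin (n + 1), ω i = xs i}
      = (if xs 0 = x then 1 else 0) * ∏ i : Fin n, p (xs i.castSucc) (xs i.succ)

/-- Irreducibility: every state is reachable from every state with positive probability. -/
def MC.Irreducible {E : Type*} [MeasurableSpace E] (M : MC E) : Prop :=
  ∀ x y : E, ∃ n : ℕ, 0 < M.P x {ω | ω n = y}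

/-- Recurrence: started from any state, the chain returns to that state infinitely often
almost surely. -/
def MC.Recurrent {E : Type*} [MeasurableSpace E] (M : MC E) : Prop :=
  ∀ x : E, M.P x {ω | ∀ N : ℕ, ∃ n, N ≤ n ∧ ω n = x} = 1

/-- Green function of the chain killed just before the first return time `T'_{x0}`:
`G_{x0}(x,y) = E_x[L^y_{T'_{x0} - 1}]`, the expected number of visits to `y` at times `n`
such that `x0` has not been visited at any time `1 ≤ k ≤ n`. -/
noncomputable def MC.green {E : Type*} [MeasurableSpace E] (M : MC E) (x0 x y : E) : ℝ≥0∞ :=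
  ∫⁻ ω, (∑' n : ℕ, if ω n = y ∧ ∀ k, 1 ≤ k → k ≤ n → ω k ≠ x0 then (1 : ℝ≥0∞) else 0) ∂ M.P x

/-- Green function of the chain killed just before the first positive hitting time of the
set `{x0, x1}`: `G_{x0,x1}(x,y) = E_x[L^y_{(T'_{x0} ∧ T'_{x1}) - 1}]`. -/
noncomputable def MC.green2 {E : Type*} [MeasurableSpace E] (M : MC E) (x0 x1 x y : E) : ℝ≥0∞ :=
  ∫⁻ ω, (∑' n : ℕ,
    if ω n = y ∧ ∀ k, 1 ≤ k → k ≤ n → (ω k ≠ x0 ∧ ω k ≠ x1) then (1 : ℝ≥0∞) else 0) ∂ M.P x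

/-!
Killed Green functions are path sums: the Green function with taboo states, from `x` to `y`, is the
sum of the weights `p l₀ l₁ ⋯ p lₙ₋₁ lₙ` over the finite paths `x = l₀, l₁, …, lₙ = y` that avoid
the taboo states at positive times. A path from `x` to `y` avoiding `x0` either also avoids `x1`,
or splits uniquely at its last visit to `x1` into a path from `x` to `x1` avoiding `x0` and a path
from `x1` to `y` avoiding `x0` and `x1`. Weights multiply under this concatenation, so summing over
paths gives the identity.
-/

namespace List

variable {α : Type*}

theorem exists_eq_append_cons_notMem_of_mem {z : α} {l : List α} (h : z ∈ l) :
    ∃ u v, l = u ++ z :: v ∧ z ∉ v := by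
  induction l with
  | nil => simp at h
  | cons a t ih =>
    by_cases ht : z ∈ t
    · obtain ⟨u, v, rfl, hv⟩ := ih ht
      exact ⟨a :: u, v, rfl, hv⟩
    · obtain rfl : z = a := by simpa [ht] using h
      exact ⟨[], t, rfl, ht⟩

theorem append_cons_inj_of_notMem_right {u v u' v' : List α} {z : α} (hv : z ∉ v)
    (hv' : z ∉ v') (h : u ++ z :: v = u' ++ z :: v') : u = u' ∧ v = v' := by
  simp only [append_eq_append_iff, cons_eq_append_iff, cons_eq_cons] at h
  rcases h with ⟨c, rfl, h⟩ | ⟨c, rfl, h⟩ <;> rcases h with h | ⟨d, rfl, h⟩ <;> simp_all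

theorem getLast?_eq_some_of_getLastD_eq {l : List α} {d a : α} (h : l.getLastD d = a)
    (hd : d ≠ a) : l.getLast? = some a := by
  rw [getLastD_eq_getLast?] at h
  cases hl : l.getLast? <;> simp_all

theorem getLastD_append (u v : List α) (d : α) :
    (u ++ v).getLastD d = v.getLastD (u.getLastD d) := by
  induction u generalizing d with
  | nil => rfl
  | cons a u ih => rw [cons_append, getLastD_cons, ih, getLastD_cons]

end List

namespace MeasureTheory

theorem nullMeasurableSet_of_measure_add_measure_compl_le {α : Type*} [MeasurableSpace α]
    {μ : Measure α} [IsFiniteMeasure μ] {s : Set α} (h : μ s + μ sᶜ ≤ μ Set.univ) :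
    NullMeasurableSet s μ := by
  set T := toMeasurable μ s
  set S := toMeasurable μ sᶜ
  have hTS : T ∪ S = Set.univ := Set.eq_univ_of_forall fun a => by
    by_cases ha : a ∈ s
    · exact Or.inl (subset_toMeasurable μ s ha)
    · exact Or.inr (subset_toMeasurable μ sᶜ ha)
  have hTS_null : μ (T ∩ S) = 0 := by
    have hadd := measure_union_add_inter (μ := μ) T (measurableSet_toMeasurable μ sᶜ)
    rw [hTS, measure_toMeasurable, measure_toMeasurable] at hadd
    refine nonpos_iff_eq_zero.1 ((ENNReal.add_le_add_iff_left (measure_ne_top μ Set.univ)).1 ?_)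
    rw [hadd, add_zero]
    exact h
  refine (measurableSet_toMeasurable μ s).nullMeasurableSet.congr ((ae_eq_set (μ := μ)).2 ⟨?_, ?_⟩)
  · exact measure_mono_null
      (fun a ha => Set.mem_inter ha.1 (subset_toMeasurable μ sᶜ ha.2)) hTS_null
  · rw [Set.sdiff_eq_empty.2 (subset_toMeasurable μ s), measure_empty]

end MeasureTheory

namespace MC

section Paths

variable {E : Type*}

def segment (ω : ℕ → E) (n : ℕ) : List E := List.ofFn fun i : Fin n => ω (i + 1)

@[simp] lemma length_segment (ω : ℕ → E) (n : ℕ) : (segment ω n).length = n :=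
  List.length_ofFn

lemma mem_segment {ω : ℕ → E} {n : ℕ} {b : E} :
    b ∈ segment ω n ↔ ∃ k, 1 ≤ k ∧ k ≤ n ∧ ω k = b := by
  simp only [segment, List.mem_ofFn]
  constructor
  · rintro ⟨i, rfl⟩
    exact ⟨i + 1, by omega, i.isLt, rfl⟩
  · rintro ⟨k, hk1, hkn, rfl⟩
    exact ⟨⟨k - 1, by omega⟩, congrArg ω (by simp only; omega)⟩

lemma getLastD_segment (ω : ℕ → E) (n : ℕ) : (segment ω n).getLastD (ω 0) = ω n := by
  cases n with
  | zero => rfl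
  | succ n => rw [segment, List.ofFn_succ_last, List.getLastD_concat]; rfl

lemma segment_eq_iff {ω : ℕ → E} {l : List E} :
    segment ω l.length = l ↔ ∀ i : Fin l.length, ω (i + 1) = l.get i := by
  conv_lhs => rhs; rw [← List.ofFn_get l]
  exact List.ofFn_inj.trans funext_iff

end Paths

variable {E : Type*} [MeasurableSpace E] (M : MC E)

/-- A path started at `a` is encoded by the list of the states it visits at times `1, …, n`. -/
noncomputable def pathWeight : E → List E → ℝ≥0∞
  | _, [] => 1
  | a, b :: l => M.p a b * pathWeight b l

@[simp] lemma pathWeight_nil (a : E) : M.pathWeight a [] = 1 := rfl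

@[simp] lemma pathWeight_cons (a b : E) (l : List E) :
    M.pathWeight a (b :: l) = M.p a b * M.pathWeight b l := rfl

lemma pathWeight_append (a : E) (u v : List E) :
    M.pathWeight a (u ++ v) = M.pathWeight a u * M.pathWeight (u.getLastD a) v := by
  induction u generalizing a with
  | nil => simp
  | cons b u ih => rw [List.cons_append, pathWeight_cons, pathWeight_cons, ih, mul_assoc,
      List.getLastD_cons]

noncomputable def pathSum (x : E) (s : Set (List E)) : ℝ≥0∞ :=
  ∑' l, s.indicator (M.pathWeight x) l

lemma pathSum_inter_add_pathSum_diff (x : E) (s t : Set (List E)) :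
    M.pathSum x (s ∩ t) + M.pathSum x (s \ t) = M.pathSum x s := by
  rw [pathSum, pathSum, pathSum, ← ENNReal.tsum_add]
  congr 1 with l
  by_cases hs : l ∈ s <;> by_cases ht : l ∈ t <;> simp [hs, ht]

lemma pathSum_length_eq (x : E) (n : ℕ) : M.pathSum x {l | l.length = n} = 1 := by
  induction n generalizing x with
  | zero => simp [pathSum, Set.indicator_apply]
  | succ n ih =>
    have hcons : Function.Injective fun q : E × List E => q.1 :: q.2 :=
      fun q q' h => Prod.ext (List.cons.inj h).1 (List.cons.inj h).2
    rw [pathSum, ← hcons.tsum_eq]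
    swap
    · rintro (_ | ⟨b, l⟩) hl
      · simp at hl
      · exact ⟨(b, l), rfl⟩
    calc ∑' q : E × List E, {l | l.length = n + 1}.indicator (M.pathWeight x) (q.1 :: q.2)
        = ∑' b, M.p x b * M.pathSum b {l | l.length = n} := by
          rw [ENNReal.tsum_prod']
          congr 1 with b
          rw [pathSum, ← ENNReal.tsum_mul_left]
          congr 1 with l
          simp [Set.indicator_apply]
      _ = 1 := by simp only [ih, mul_one, M.stochastic]

def tabooPaths (p : E → Prop) (x y : E) : Set (List E) :=
  {l | l.getLastD x = y ∧ ∀ b ∈ l, p b}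

noncomputable def tabooGreen (p : E → Prop) (x y : E) : ℝ≥0∞ :=
  M.pathSum x (tabooPaths p x y)

lemma indicator_tabooPaths_inter_mem_append (p : E → Prop) (x y : E) {z : E} (w : List E)
    {v : List E} (hv : z ∉ v) :
    (tabooPaths p x y ∩ {l | z ∈ l}).indicator (M.pathWeight x) (w ++ [z] ++ v) =
      (tabooPaths p x z).indicator (M.pathWeight x) (w ++ [z]) *
        (tabooPaths (fun b => p b ∧ b ≠ z) z y).indicator (M.pathWeight z) v := by
  have hlast : (w ++ [z] ++ v).getLastD x = v.getLastD z := by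
    rw [List.getLastD_append, List.getLastD_concat]
  have hmem : z ∈ w ++ [z] ++ v := by simp
  have hvz : (∀ b ∈ v, p b ∧ b ≠ z) ↔ ∀ b ∈ v, p b :=
    forall₂_congr fun b hb => and_iff_left (ne_of_mem_of_not_mem hb hv)
  simp only [tabooPaths, Set.indicator_apply, Set.mem_inter_iff, Set.mem_ofPred_eq, hlast, hmem,
    hvz, List.getLastD_concat, List.forall_mem_append, M.pathWeight_append x (w ++ [z]),
    and_true, true_and]
  split_ifs <;> simp_all

/-- Last-exit decomposition: a path through `z` splits uniquely at its last visit to `z`. -/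
lemma pathSum_tabooPaths_inter_mem (p : E → Prop) {x z : E} (hxz : x ≠ z) (y : E) :
    M.pathSum x (tabooPaths p x y ∩ {l | z ∈ l}) =
      M.tabooGreen p x z * M.tabooGreen (fun b => p b ∧ b ≠ z) z y := by
  let S : Set (List E × List E) := {q | q.1.getLast? = some z ∧ z ∉ q.2}
  let f : List E × List E → ℝ≥0∞ := fun q => (tabooPaths p x z).indicator (M.pathWeight x) q.1 *
    (tabooPaths (fun b => p b ∧ b ≠ z) z y).indicator (M.pathWeight z) q.2
  have hinj : Function.Injective fun q : S => q.1.1 ++ q.1.2 := by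
    rintro ⟨⟨u, v⟩, hu, hv⟩ ⟨⟨u', v'⟩, hu', hv'⟩ h
    obtain ⟨w, rfl⟩ := List.getLast?_eq_some_iff.1 hu
    obtain ⟨w', rfl⟩ := List.getLast?_eq_some_iff.1 hu'
    simp only [List.append_assoc, List.singleton_append] at h
    obtain ⟨rfl, rfl⟩ := List.append_cons_inj_of_notMem_right hv hv' h
    rfl
  have hrange : Function.support ((tabooPaths p x y ∩ {l | z ∈ l}).indicator (M.pathWeight x)) ⊆
      Set.range fun q : S => q.1.1 ++ q.1.2 := fun l hl => by
    obtain ⟨w, v, rfl, hv⟩ :=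
      List.exists_eq_append_cons_notMem_of_mem (Set.mem_of_indicator_ne_zero hl).2
    exact ⟨⟨(w ++ [z], v), List.getLast?_concat, hv⟩, by simp⟩
  have hsupp : Function.support f ⊆ S := fun q hq => by
    rw [Function.mem_support, mul_ne_zero_iff] at hq
    obtain ⟨⟨hu, -⟩, -, hv⟩ :=
      And.intro (Set.mem_of_indicator_ne_zero hq.1) (Set.mem_of_indicator_ne_zero hq.2)
    exact ⟨List.getLast?_eq_some_of_getLastD_eq hu hxz, fun hz => (hv z hz).2 rfl⟩
  calc M.pathSum x (tabooPaths p x y ∩ {l | z ∈ l})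
      = ∑' q : S, (tabooPaths p x y ∩ {l | z ∈ l}).indicator (M.pathWeight x) (q.1.1 ++ q.1.2) :=
        (hinj.tsum_eq hrange).symm
    _ = ∑' q : S, f q := tsum_congr fun ⟨⟨u, v⟩, hu, hv⟩ => by
        obtain ⟨w, rfl⟩ := List.getLast?_eq_some_iff.1 hu
        exact M.indicator_tabooPaths_inter_mem_append p x y w hv
    _ = ∑' q, f q := tsum_subtype_eq_of_support_subset hsupp
    _ = M.tabooGreen p x z * M.tabooGreen (fun b => p b ∧ b ≠ z) z y := by
        rw [ENNReal.tsum_prod (f := fun u v => f (u, v)), tabooGreen, tabooGreen, pathSum, pathSum,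
          ← ENNReal.tsum_mul_right]
        simp only [f, ENNReal.tsum_mul_left]

theorem tabooGreen_eq_add_mul (p : E → Prop) {x z : E} (hxz : x ≠ z) (y : E) :
    M.tabooGreen p x y = M.tabooGreen (fun b => p b ∧ b ≠ z) x y +
      M.tabooGreen (fun b => p b ∧ b ≠ z) z y * M.tabooGreen p x z := by
  have hdiff : tabooPaths p x y \ {l | z ∈ l} = tabooPaths (fun b => p b ∧ b ≠ z) x y := by
    ext l
    simp only [tabooPaths, Set.mem_sdiff, Set.mem_ofPred_eq, forall_and, and_assoc]
    exact and_congr_right fun _ => and_congr_right fun _ =>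
      ⟨fun h b hb hbz => h (hbz ▸ hb), fun h hz => h z hz rfl⟩
  rw [tabooGreen, ← M.pathSum_inter_add_pathSum_diff x _ {l | z ∈ l},
    M.pathSum_tabooPaths_inter_mem p hxz, hdiff, add_comm, mul_comm]
  rfl

lemma prod_p_get_eq_pathWeight (a : E) (l : List E) :
    ∏ i : Fin l.length, M.p ((a :: l).get i.castSucc) ((a :: l).get i.succ) =
      M.pathWeight a l := by
  induction l generalizing a with
  | nil => simp
  | cons b l ih =>
    show ∏ i : Fin (l.length + 1), _ = _
    rw [Fin.prod_univ_succ]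
    simpa using congrArg (M.p a b * ·) (ih b)

def cylinder (a : E) (l : List E) : Set (ℕ → E) := {ω | ω 0 = a ∧ segment ω l.length = l}

lemma measure_cylinder (x a : E) (l : List E) :
    M.P x (cylinder a l) = (if a = x then 1 else 0) * M.pathWeight a l := by
  have hcyl : cylinder a l = {ω | ∀ i : Fin (l.length + 1), ω i = (a :: l).get i} := by
    ext ω
    simp [cylinder, segment_eq_iff, Fin.forall_fin_succ]
  rw [hcyl, M.fdd x l.length, prod_p_get_eq_pathWeight]
  rfl

variable [Countable E]

def pathEvent (C : E → List E → Prop) (n : ℕ) : Set (ℕ → E) := {ω | C (ω 0) (segment ω n)}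

lemma measure_pathEvent_le (C : E → List E → Prop) (x : E) (n : ℕ) :
    M.P x (pathEvent C n) ≤ M.pathSum x ({l | l.length = n} ∩ {l | C x l}) := by
  let S : E → List E → Set (ℕ → E) := fun a l => if l.length = n ∧ C a l then cylinder a l else ∅
  have hcover : pathEvent C n ⊆ ⋃ a, ⋃ l, S a l := fun ω hω =>
    Set.mem_iUnion₂.2 ⟨ω 0, segment ω n, by simpa [S, cylinder, pathEvent] using hω⟩
  calc M.P x (pathEvent C n) ≤ ∑' a, ∑' l, M.P x (S a l) :=
        (measure_mono hcover).trans <|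
          (measure_iUnion_le _).trans <| ENNReal.tsum_le_tsum fun a => measure_iUnion_le _
    _ = ∑' l, M.P x (S x l) := tsum_eq_single x fun a ha => by
        simp [S, apply_ite, measure_cylinder, ha]
    _ = M.pathSum x ({l | l.length = n} ∩ {l | C x l}) := by
        simp [S, apply_ite, measure_cylinder, pathSum, Set.indicator_apply]

lemma measure_pathEvent_add_measure_compl_le (C : E → List E → Prop) (x : E) (n : ℕ) :
    M.P x (pathEvent C n) + M.P x (pathEvent C n)ᶜ ≤ 1 :=
  calc _ ≤ M.pathSum x ({l | l.length = n} ∩ {l | C x l}) +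
        M.pathSum x ({l | l.length = n} \ {l | C x l}) :=
        add_le_add (M.measure_pathEvent_le C x n) (M.measure_pathEvent_le (fun a l => ¬ C a l) x n)
    _ = 1 := by rw [pathSum_inter_add_pathSum_diff, pathSum_length_eq]

/-- The σ-algebra on `E` is arbitrary, so cylinders need not be measurable; path events are
null-measurable because the outer measures of the event and of its complement add up to `1`. -/
lemma nullMeasurableSet_pathEvent (C : E → List E → Prop) (x : E) (n : ℕ) :
    NullMeasurableSet (pathEvent C n) (M.P x) := by
  have := M.prob x
  refine nullMeasurableSet_of_measure_add_measure_compl_le ?_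
  rw [measure_univ]
  exact M.measure_pathEvent_add_measure_compl_le C x n

lemma measure_pathEvent (C : E → List E → Prop) (x : E) (n : ℕ) :
    M.P x (pathEvent C n) = M.pathSum x ({l | l.length = n} ∩ {l | C x l}) := by
  have := M.prob x
  refine le_antisymm (M.measure_pathEvent_le C x n)
    (ENNReal.le_of_add_le_add_right (measure_ne_top (M.P x) (pathEvent C n)ᶜ) ?_)
  calc _ ≤ M.pathSum x ({l | l.length = n} ∩ {l | C x l}) +
        M.pathSum x ({l | l.length = n} \ {l | C x l}) :=
        add_le_add_right (M.measure_pathEvent_le (fun a l => ¬ C a l) x n) _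
    _ = M.P x (pathEvent C n) + M.P x (pathEvent C n)ᶜ := by
        rw [pathSum_inter_add_pathSum_diff, pathSum_length_eq,
          measure_add_measure_compl₀ (M.nullMeasurableSet_pathEvent C x n), measure_univ]

lemma lintegral_tsum_indicator_pathEvent (C : E → List E → Prop) (x : E) :
    ∫⁻ ω, ∑' n, (pathEvent C n).indicator 1 ω ∂M.P x = M.pathSum x {l | C x l} := by
  rw [lintegral_tsum fun n =>
    measurable_one.aemeasurable.indicator₀ (M.nullMeasurableSet_pathEvent C x n)]
  simp only [lintegral_indicator_one₀ (M.nullMeasurableSet_pathEvent C x _), measure_pathEvent,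
    pathSum]
  rw [ENNReal.tsum_comm]
  congr 1 with l
  rw [tsum_eq_single l.length]
  · simp [Set.indicator_apply]
  · intro n hn
    simp [Ne.symm hn]

lemma lintegral_tsum_indicator_visits (p : E → Prop) (x y : E) :
    ∫⁻ ω, ∑' n, {ω | ω n = y ∧ ∀ k, 1 ≤ k → k ≤ n → p (ω k)}.indicator 1 ω ∂M.P x =
      M.tabooGreen p x y := by
  have hvisit : ∀ n, {ω : ℕ → E | ω n = y ∧ ∀ k, 1 ≤ k → k ≤ n → p (ω k)} =
      pathEvent (fun a l => l.getLastD a = y ∧ ∀ b ∈ l, p b) n := fun n => by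
    ext ω
    simp only [pathEvent, Set.mem_ofPred_eq, getLastD_segment, mem_segment]
    grind
  simp_rw [hvisit]
  exact M.lintegral_tsum_indicator_pathEvent _ x

lemma green_eq_tabooGreen (x0 x y : E) : M.green x0 x y = M.tabooGreen (· ≠ x0) x y := by
  rw [← lintegral_tsum_indicator_visits, MC.green]
  refine lintegral_congr fun ω => tsum_congr fun n => ?_
  simp [Set.indicator_apply]

lemma green2_eq_tabooGreen (x0 x1 x y : E) :
    M.green2 x0 x1 x y = M.tabooGreen (fun b => b ≠ x0 ∧ b ≠ x1) x y := by
  rw [← lintegral_tsum_indicator_visits, MC.green2]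
  refine lintegral_congr fun ω => tsum_congr fun n => ?_
  simp [Set.indicator_apply]

end MC

theorem green_decomposition_two_killing_points_general
    {E : Type*} [Countable E] [MeasurableSpace E]
    (M : MC E)
    (x0 x1 x y : E)
    (hx1 : x ≠ x1) :
    M.green x0 x y = M.green2 x0 x1 x y + M.green2 x0 x1 x1 y * M.green x0 x x1 := by
  rw [M.green_eq_tabooGreen, M.green_eq_tabooGreen, M.green2_eq_tabooGreen,
    M.green2_eq_tabooGreen]
  exact M.tabooGreen_eq_add_mul _ hx1 y

/-- For distinct states `x0, x1, y` of an irreducible recurrent Markov chain and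
`x ∉ {x0, x1}`: `G_{x0}(x,y) = G_{x0,x1}(x,y) + G_{x0,x1}(x1,y) · G_{x0}(x,x1)`. -/
theorem green_decomposition_two_killing_points
    {E : Type*} [Countable E] [MeasurableSpace E]
    (M : MC E) (hirr : M.Irreducible) (hrec : M.Recurrent)
    (x0 x1 x y : E) (h01 : x0 ≠ x1) (h0y : x0 ≠ y) (h1y : x1 ≠ y)
    (hx0 : x ≠ x0) (hx1 : x ≠ x1) :
    M.green x0 x y = M.green2 x0 x1 x y + M.green2 x0 x1 x1 y * M.green x0 x x1 :=
  green_decomposition_two_killing_points_general M x0 x1 x y hx1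
end

section
/- On the k-ary tree, any nonnegative function ψ with ψ(∅) = 0, harmonic at every vertex ≠ ∅, and satisfying ψ(z) ≤ k^m − 1 on the set F_m of vertices whose longest common prefix with a fixed infinite ray y∞ has length exactly m, must be constant on each F_m: ψ(x) = ψ(y_m) for every x ∈ F_m, where y_m is the depth-m vertex on the ray. -/
/-!
A vertex `x ∈ F_m` other than `y_m` lies in the cone `{y_m ++ a :: w}` for some letter
`a ≠ y∞ m`, and the whole cone lies in `F_m`, so `ψ` is bounded there. Bounded harmonic functions
on a cone equal their value at the cone's parent `y_m`: applied to `ψ` and to `-ψ`, this is a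
maximum principle, proved by observing that the level suprema `S n` of `ψ` over the depth-`n`
vertices of the cone, preceded by the parent value `S 0 = ψ(y_m)`, form a convex sequence, since
the walk steps one level up or one level down with probability `1/2` each. A convex sequence
bounded above is antitone, so `ψ ≤ S 0` on the cone.
-/

/-- Length of the longest common prefix of two lists. -/
def commonLen {α : Type*} [DecidableEq α] : List α → List α → ℕ
  | a :: as, b :: bs => if a = b then commonLen as bs + 1 else 0
  | _, _ => 0

/-- `ψ` is harmonic at the nonempty vertex `x` for the `k`-ary tree random walk. -/
def treeHarmAt (k : ℕ) (ψ : List (Fin k) → ℝ) (x : List (Fin k)) : Prop :=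
  ψ x = (1 / 2) * ψ x.dropLast + ∑ j : Fin k, (1 / (2 * (k : ℝ))) * ψ (x ++ [j])

/-- Length of the longest common prefix of a finite sequence `x` with the infinite ray
`y∞`. -/
def rayLen {k : ℕ} (yinf : ℕ → Fin k) (x : List (Fin k)) : ℕ :=
  commonLen x (List.ofFn fun i : Fin x.length => yinf i)

theorem commonLen_append_left {α : Type*} [DecidableEq α] (u v w : List α) :
    commonLen (u ++ v) (u ++ w) = u.length + commonLen v w := by
  induction u with
  | nil => simp
  | cons a u ih => simp only [List.cons_append, commonLen, if_pos, ih, List.length_cons]; omega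

theorem rayLen_cons {k : ℕ} (yinf : ℕ → Fin k) (b : Fin k) (x : List (Fin k)) :
    rayLen yinf (b :: x) = if b = yinf 0 then rayLen (fun i => yinf (i + 1)) x + 1 else 0 := by
  simp only [rayLen, List.length_cons, List.ofFn_succ, commonLen, Fin.val_succ, Fin.val_zero]

theorem rayLen_ofFn_append {k : ℕ} (yinf : ℕ → Fin k) (m : ℕ) (v : List (Fin k)) :
    rayLen yinf ((List.ofFn fun i : Fin m => yinf i) ++ v) =
      m + rayLen (fun i => yinf (m + i)) v := by
  have hlen : ((List.ofFn fun i : Fin m => yinf i) ++ v).length = m + v.length := by simp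
  rw [rayLen, hlen, List.ofFn_add]
  simp only [Fin.val_castLE, Fin.val_natAdd]
  rw [commonLen_append_left, List.length_ofFn]
  rfl

theorem eq_ofFn_or_branch {k : ℕ} {yinf : ℕ → Fin k} {x : List (Fin k)} {m : ℕ}
    (hx : rayLen yinf x = m) :
    x = (List.ofFn fun i : Fin m => yinf i) ∨
      ∃ a w, a ≠ yinf m ∧ x = (List.ofFn fun i : Fin m => yinf i) ++ a :: w := by
  induction x generalizing yinf m with
  | nil => left; simp [← hx, rayLen, commonLen]
  | cons b x ih =>
    rw [rayLen_cons] at hx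
    split_ifs at hx with hb
    · obtain ⟨m, rfl⟩ : ∃ m', m = m' + 1 := ⟨_, hx.symm⟩
      subst hb
      rcases ih (yinf := fun i => yinf (i + 1)) (Nat.succ_injective hx) with h | ⟨a, w, ha, h⟩
      · left
        rw [h, List.ofFn_succ]
        rfl
      · right
        refine ⟨a, w, ha, ?_⟩
        rw [h, List.ofFn_succ]
        rfl
    · subst hx
      exact Or.inr ⟨b, x, hb, rfl⟩

theorem Antitone.of_convex_of_bddAbove {t : ℕ → ℝ}
    (hconv : ∀ n, 2 * t (n + 1) ≤ t n + t (n + 2)) (hbdd : BddAbove (Set.range t)) :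
    Antitone t := by
  obtain ⟨B, hB⟩ := hbdd
  have hgap : Monotone fun n => t (n + 1) - t n :=
    monotone_nat_of_le_succ fun n => by linarith [hconv n]
  have hgrow (n j : ℕ) : t n + j * (t (n + 1) - t n) ≤ t (n + j) := by
    induction j with
    | zero => simp
    | succ j ih =>
      have := hgap (Nat.le_add_right n j)
      push_cast
      rw [← add_assoc]
      linarith
  refine antitone_nat_of_succ_le fun n => not_lt.1 fun hlt => ?_
  obtain ⟨j, hj⟩ := exists_nat_gt ((B - t n) / (t (n + 1) - t n))
  rw [div_lt_iff₀ (sub_pos.2 hlt)] at hj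
  linarith [hgrow n j, hB ⟨n + j, rfl⟩]

def treeSubharmAt (k : ℕ) (ψ : List (Fin k) → ℝ) (x : List (Fin k)) : Prop :=
  ψ x ≤ (1 / 2) * ψ x.dropLast + ∑ j : Fin k, (1 / (2 * (k : ℝ))) * ψ (x ++ [j])

theorem treeHarmAt.treeSubharmAt {k : ℕ} {ψ : List (Fin k) → ℝ} {x : List (Fin k)}
    (h : treeHarmAt k ψ x) : treeSubharmAt k ψ x :=
  h.le

theorem treeHarmAt.neg {k : ℕ} {ψ : List (Fin k) → ℝ} {x : List (Fin k)}
    (h : treeHarmAt k ψ x) : treeHarmAt k (-ψ) x := by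
  simp only [treeHarmAt, Pi.neg_apply, mul_neg, Finset.sum_neg_distrib] at h ⊢
  linarith

theorem sum_one_div_two_mul_le_half {k : ℕ} (hk : 0 < k) {g : Fin k → ℝ} {s : ℝ}
    (h : ∀ j, g j ≤ s) :
    ∑ j : Fin k, (1 / (2 * (k : ℝ))) * g j ≤ s / 2 := by
  calc ∑ j : Fin k, (1 / (2 * (k : ℝ))) * g j ≤ ∑ _j : Fin k, (1 / (2 * (k : ℝ))) * s :=
        Finset.sum_le_sum fun j _ => by gcongr; exact h j
    _ = s / 2 := by
        rw [Finset.sum_const, Finset.card_univ, Fintype.card_fin, nsmul_eq_mul]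
        field_simp

theorem nonempty_length_eq {k : ℕ} (hk : 0 < k) (n : ℕ) :
    Nonempty {w : List (Fin k) // w.length = n} :=
  ⟨⟨List.replicate n ⟨0, hk⟩, List.length_replicate⟩⟩

section Cone

variable {k : ℕ} (f : List (Fin k) → ℝ) (p : List (Fin k))

/-- Index `0` is the parent of the apex `p`; index `n + 1` is the supremum over depth `n` of the
cone `{p ++ w}`. -/
noncomputable def coneLevelSup : ℕ → ℝ
  | 0 => f p.dropLast
  | n + 1 => ⨆ w : {w : List (Fin k) // w.length = n}, f (p ++ w)

variable {f p} {B : ℝ}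

theorem le_coneLevelSup (hB : ∀ w, f (p ++ w) ≤ B) (w : List (Fin k)) :
    f (p ++ w) ≤ coneLevelSup f p (w.length + 1) := by
  refine le_ciSup (f := fun v : {v : List (Fin k) // v.length = w.length} => f (p ++ v.1))
    ⟨B, ?_⟩ ⟨w, rfl⟩
  rintro _ ⟨v, rfl⟩
  exact hB v

theorem dropLast_le_coneLevelSup (hB : ∀ w, f (p ++ w) ≤ B) (w : List (Fin k)) :
    f (p ++ w).dropLast ≤ coneLevelSup f p w.length := by
  rcases w.eq_nil_or_concat' with rfl | ⟨w, a, rfl⟩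
  · simp [coneLevelSup]
  · simpa [← List.append_assoc] using le_coneLevelSup hB w

theorem coneLevelSup_le (hk : 0 < k) (hB : ∀ w, f (p ++ w) ≤ B) (n : ℕ) :
    coneLevelSup f p n ≤ max (f p.dropLast) B := by
  cases n with
  | zero => exact le_max_left _ _
  | succ n =>
    have := nonempty_length_eq hk n
    exact (ciSup_le fun w : {w : List (Fin k) // w.length = n} => hB w.1).trans (le_max_right _ _)

theorem coneLevelSup_convex (hk : 0 < k) (hB : ∀ w, f (p ++ w) ≤ B)
    (hsub : ∀ w, treeSubharmAt k f (p ++ w)) (n : ℕ) :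
    2 * coneLevelSup f p (n + 1) ≤ coneLevelSup f p n + coneLevelSup f p (n + 2) := by
  have := nonempty_length_eq hk n
  suffices coneLevelSup f p (n + 1) ≤ coneLevelSup f p n / 2 + coneLevelSup f p (n + 2) / 2 by
    linarith
  refine ciSup_le ?_
  rintro ⟨w, rfl⟩
  have hmean := hsub w
  rw [treeSubharmAt] at hmean
  have hchildren : ∑ j : Fin k, (1 / (2 * (k : ℝ))) * f (p ++ w ++ [j]) ≤
      coneLevelSup f p (w.length + 2) / 2 :=
    sum_one_div_two_mul_le_half hk fun j => by simpa using le_coneLevelSup hB (w ++ [j])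
  linarith [dropLast_le_coneLevelSup hB w]

theorem le_dropLast_of_treeSubharmAt (hk : 0 < k) (hB : ∀ w, f (p ++ w) ≤ B)
    (hsub : ∀ w, treeSubharmAt k f (p ++ w)) (w : List (Fin k)) :
    f (p ++ w) ≤ f p.dropLast :=
  calc f (p ++ w) ≤ coneLevelSup f p (w.length + 1) := le_coneLevelSup hB w
    _ ≤ coneLevelSup f p 0 :=
      Antitone.of_convex_of_bddAbove (coneLevelSup_convex hk hB hsub)
        ⟨_, by rintro _ ⟨n, rfl⟩; exact coneLevelSup_le hk hB n⟩ (Nat.zero_le _)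

theorem eq_dropLast_of_treeHarmAt (hk : 0 < k) {A : ℝ} (hA : ∀ w, A ≤ f (p ++ w))
    (hB : ∀ w, f (p ++ w) ≤ B) (hharm : ∀ w, treeHarmAt k f (p ++ w)) (w : List (Fin k)) :
    f (p ++ w) = f p.dropLast :=
  le_antisymm (le_dropLast_of_treeSubharmAt hk hB (fun w => (hharm w).treeSubharmAt) w) <|
    neg_le_neg_iff.1 <| le_dropLast_of_treeSubharmAt (f := -f) hk (fun w => neg_le_neg (hA w))
      (fun w => (hharm w).neg.treeSubharmAt) w

end Cone

theorem tree_harmonic_constant_on_ray_classes_general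
    (k : ℕ) (yinf : ℕ → Fin k)
    (ψ : List (Fin k) → ℝ) (hnonneg : ∀ x, 0 ≤ ψ x)
    (hharm : ∀ x : List (Fin k), x ≠ [] → treeHarmAt k ψ x)
    (hbound : ∀ m : ℕ, ∀ x : List (Fin k), rayLen yinf x = m → ψ x ≤ (k : ℝ) ^ m - 1) :
    ∀ m : ℕ, ∀ x : List (Fin k), rayLen yinf x = m →
      ψ x = ψ (List.ofFn fun i : Fin m => yinf i) := by
  intro m x hx
  set ym := List.ofFn fun i : Fin m => yinf i
  rcases eq_ofFn_or_branch hx with rfl | ⟨a, w, ha, rfl⟩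
  · rfl
  have hcone (v : List (Fin k)) : rayLen yinf (ym ++ [a] ++ v) = m := by
    simp [ym, rayLen_ofFn_append, rayLen_cons, ha]
  simpa using eq_dropLast_of_treeHarmAt (p := ym ++ [a]) (yinf 0).pos
    (fun v => hnonneg _) (fun v => hbound m _ (hcone v)) (fun v => hharm _ (by simp)) w

/-- On the `k`-ary tree, any nonnegative `ψ` with `ψ(∅) = 0`, harmonic at every nonempty
vertex, and satisfying `ψ(z) ≤ k^m − 1` on the set `F_m` of vertices whose longest common
prefix with a fixed infinite ray `y∞` has length exactly `m`, is constant on each `F_m`: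
`ψ(x) = ψ(y_m)` for every `x ∈ F_m`, `y_m` being the depth-`m` vertex on the ray. -/
theorem tree_harmonic_constant_on_ray_classes
    (k : ℕ) (hk : 2 ≤ k) (yinf : ℕ → Fin k)
    (ψ : List (Fin k) → ℝ) (hnonneg : ∀ x, 0 ≤ ψ x) (hroot : ψ [] = 0)
    (hharm : ∀ x : List (Fin k), x ≠ [] → treeHarmAt k ψ x)
    (hbound : ∀ m : ℕ, ∀ x : List (Fin k), rayLen yinf x = m → ψ x ≤ (k : ℝ) ^ m - 1) :
    ∀ m : ℕ, ∀ x : List (Fin k), rayLen yinf x = m →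
      ψ x = ψ (List.ofFn fun i : Fin m => yinf i) :=
  tree_harmonic_constant_on_ray_classes_general k yinf ψ hnonneg hharm hbound
end
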